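/- arXiv:0710.0460 — 2 statements merged into one kernel-verified Lean document; each statement's English description precedes it below -/
import Mathlib

section
/- With N the number of visits to y before first return to x by a simple random walk on a tree, where d(x,y)=L, deg(x)=D₁, deg(y)=D₂, the random variable η := N/D₂ - 1/D₁ satisfies E[η] = 0, and for every k ≥ 1 there exists a constant c = c(k), independent of D₁, D₂ and L, such that E|η|^k ≤ c·L^{k-1}. -/
open MeasureTheory Set
open scoped ENNReal

/-!
Given `N ≥ 1`, the law of `N` is geometric: `P(N = n + 1) = r qⁿ` with `r = 1/(L²D₁D₂)` and
`1 - q = 1/(LD₂)`. Since `(n + 1)ᵏ ≤ k! C(n + k, k)`, the negative binomial series gives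
`E Nᵏ = r ∑ (n + 1)ᵏ qⁿ ≤ r k!/(1 - q)^(k+1) = k! L^(k-1) D₂ᵏ/D₁`, with equality `E N = D₂/D₁`
for `k = 1`; this is the mean-zero statement. Finally `|N/D₂ - 1/D₁|ᵏ ≤ (N/D₂)ᵏ + D₁⁻ᵏ`, so
`E|η|ᵏ ≤ k! L^(k-1) + 1`.
-/

section GeometricMoments

variable {q : ℝ}

theorem succ_pow_le_factorial_mul_choose (n k : ℕ) :
    ((n : ℝ) + 1) ^ k ≤ k.factorial * ((n + k).choose k : ℕ) := by
  rw [← Nat.cast_mul, ← Nat.ascFactorial_eq_factorial_mul_choose]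
  exact_mod_cast Nat.pow_succ_le_ascFactorial (n + 1) k

theorem summable_succ_pow_mul_geometric (k : ℕ) (hq0 : 0 ≤ q) (hq1 : q < 1) :
    Summable fun n : ℕ => ((n : ℝ) + 1) ^ k * q ^ n := by
  have hq : ‖q‖ < 1 := by rwa [Real.norm_of_nonneg hq0]
  refine .of_nonneg_of_le (fun n => by positivity) (fun n => ?_)
    ((summable_choose_mul_geometric_of_norm_lt_one k hq).mul_left (k.factorial : ℝ))
  rw [← mul_assoc]
  exact mul_le_mul_of_nonneg_right (succ_pow_le_factorial_mul_choose n k) (pow_nonneg hq0 n)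

theorem tsum_succ_pow_mul_geometric_le (k : ℕ) (hq0 : 0 ≤ q) (hq1 : q < 1) :
    ∑' n : ℕ, ((n : ℝ) + 1) ^ k * q ^ n ≤ k.factorial / (1 - q) ^ (k + 1) := by
  have hq : ‖q‖ < 1 := by rwa [Real.norm_of_nonneg hq0]
  have hchoose := summable_choose_mul_geometric_of_norm_lt_one k hq
  calc ∑' n : ℕ, ((n : ℝ) + 1) ^ k * q ^ n
      ≤ ∑' n : ℕ, (k.factorial : ℝ) * (((n + k).choose k : ℕ) * q ^ n) :=
        Summable.tsum_le_tsum (fun n => by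
          rw [← mul_assoc]
          exact mul_le_mul_of_nonneg_right (succ_pow_le_factorial_mul_choose n k)
            (pow_nonneg hq0 n))
          (summable_succ_pow_mul_geometric k hq0 hq1) (hchoose.mul_left _)
    _ = k.factorial / (1 - q) ^ (k + 1) := by
        rw [tsum_mul_left, tsum_choose_mul_geometric_of_norm_lt_one k hq, mul_one_div]

theorem tsum_succ_mul_geometric (hq0 : 0 ≤ q) (hq1 : q < 1) :
    ∑' n : ℕ, ((n : ℝ) + 1) * q ^ n = 1 / (1 - q) ^ 2 := by
  have hq : ‖q‖ < 1 := by rwa [Real.norm_of_nonneg hq0]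
  simpa using tsum_choose_mul_geometric_of_norm_lt_one 1 hq

end GeometricMoments

section CountableLaw

variable {Ω X E : Type*} [MeasurableSpace Ω] [MeasurableSpace X] [MeasurableSingletonClass X]
  [Countable X] [NormedAddCommGroup E]

theorem integrable_of_summable_measureReal_mul_norm {μ : Measure X} [IsFiniteMeasure μ]
    {f : X → E} (hf : Summable fun x => μ.real {x} * ‖f x‖) : Integrable f μ := by
  refine ⟨.of_discrete, ?_⟩
  rw [hasFiniteIntegral_iff_enorm, lintegral_countable']
  calc ∑' x, ‖f x‖ₑ * μ {x} = ∑' x, ENNReal.ofReal (μ.real {x} * ‖f x‖) := by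
        refine tsum_congr fun x => ?_
        rw [ENNReal.ofReal_mul measureReal_nonneg, ofReal_measureReal, ofReal_norm, mul_comm]
    _ = ENNReal.ofReal (∑' x, μ.real {x} * ‖f x‖) :=
        (ENNReal.ofReal_tsum_of_nonneg (fun x => by positivity) hf).symm
    _ < ∞ := ENNReal.ofReal_lt_top

theorem hasSum_integral_comp_of_summable [NormedSpace ℝ E] [CompleteSpace E] {P : Measure Ω}
    [IsFiniteMeasure P] {N : Ω → X} (hN : Measurable N) {f : X → E}
    (hf : Summable fun x => P.real {ω | N ω = x} * ‖f x‖) :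
    Integrable (fun ω => f (N ω)) P ∧
      HasSum (fun x => P.real {ω | N ω = x} • f x) (∫ ω, f (N ω) ∂P) := by
  have hlaw : ∀ x, (P.map N).real {x} = P.real {ω | N ω = x} := fun x => by
    rw [map_measureReal_apply hN (measurableSet_singleton x)]; rfl
  have hint : Integrable f (P.map N) :=
    integrable_of_summable_measureReal_mul_norm (by simpa only [hlaw] using hf)
  have hsum : Summable fun x => P.real {ω | N ω = x} • f x :=
    .of_norm (by simpa only [norm_smul, Real.norm_of_nonneg measureReal_nonneg] using hf)
  refine ⟨hint.comp_measurable hN, ?_⟩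
  rw [← integral_map hN.aemeasurable .of_discrete, integral_countable hint]
  simpa only [hlaw] using hsum.hasSum

end CountableLaw

theorem abs_sub_pow_le_pow_add_pow {R : Type*} [CommRing R] [LinearOrder R] [IsStrictOrderedRing R]
    {a b : R} (ha : 0 ≤ a) (hb : 0 ≤ b) (k : ℕ) : |a - b| ^ k ≤ a ^ k + b ^ k := by
  rcases le_total a b with h | h
  · rw [abs_sub_comm, abs_of_nonneg (sub_nonneg.2 h)]
    have := pow_le_pow_left₀ (sub_nonneg.2 h) (sub_le_self b ha) k
    exact this.trans (le_add_of_nonneg_left (pow_nonneg ha k))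
  · rw [abs_of_nonneg (sub_nonneg.2 h)]
    have := pow_le_pow_left₀ (sub_nonneg.2 h) (sub_le_self a hb) k
    exact this.trans (le_add_of_nonneg_right (pow_nonneg hb k))

section GeometricTail

variable {Ω : Type*} [MeasurableSpace Ω] {P : Measure Ω} {N : Ω → ℕ} {r q : ℝ}

theorem integral_natCast_pow_of_geometric_tail [IsFiniteMeasure P] (hN : Measurable N)
    (hq0 : 0 ≤ q) (hq1 : q < 1) (htail : ∀ n : ℕ, P.real {ω | N ω = n + 1} = r * q ^ n)
    {k : ℕ} (hk : k ≠ 0) :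
    Integrable (fun ω => (N ω : ℝ) ^ k) P ∧
      ∫ ω, (N ω : ℝ) ^ k ∂P = r * ∑' n : ℕ, ((n : ℝ) + 1) ^ k * q ^ n := by
  have hterm : ∀ n : ℕ, P.real {ω | N ω = n + 1} * ((n + 1 : ℕ) : ℝ) ^ k =
      r * (((n : ℝ) + 1) ^ k * q ^ n) := fun n => by
    rw [htail]; push_cast; ring
  have hsum : Summable fun n : ℕ => r * (((n : ℝ) + 1) ^ k * q ^ n) :=
    (summable_succ_pow_mul_geometric k hq0 hq1).mul_left r
  obtain ⟨hint, hhas⟩ :=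
    hasSum_integral_comp_of_summable (P := P) hN (f := fun j : ℕ => (j : ℝ) ^ k) (by
      rw [← summable_nat_add_iff 1]
      simpa only [Real.norm_of_nonneg (pow_nonneg (Nat.cast_nonneg _) k), hterm] using hsum)
  refine ⟨hint, ?_⟩
  rw [← tsum_mul_left, ← hhas.tsum_eq, hhas.summable.tsum_eq_zero_add]
  simp only [smul_eq_mul, Nat.cast_zero, zero_pow hk, mul_zero, zero_add, hterm]

theorem integral_div_sub_of_geometric_tail [IsProbabilityMeasure P] (hN : Measurable N)
    (hq0 : 0 ≤ q) (hq1 : q < 1) (htail : ∀ n : ℕ, P.real {ω | N ω = n + 1} = r * q ^ n)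
    (a b : ℝ) : ∫ ω, ((N ω : ℝ) / a - b) ∂P = r / (1 - q) ^ 2 / a - b := by
  obtain ⟨hint, hmean⟩ := integral_natCast_pow_of_geometric_tail hN hq0 hq1 htail one_ne_zero
  simp only [pow_one] at hint hmean
  rw [integral_sub (hint.div_const a) (integrable_const b), integral_div, hmean,
    tsum_succ_mul_geometric hq0 hq1, integral_const, probReal_univ, one_smul, mul_one_div]

theorem integral_abs_div_sub_pow_le_of_geometric_tail [IsProbabilityMeasure P] (hN : Measurable N)
    (hq0 : 0 ≤ q) (hq1 : q < 1) (htail : ∀ n : ℕ, P.real {ω | N ω = n + 1} = r * q ^ n)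
    (hr : 0 ≤ r) {a b : ℝ} (ha : 0 ≤ a) (hb : 0 ≤ b) {k : ℕ} (hk : k ≠ 0) :
    ∫ ω, |(N ω : ℝ) / a - b| ^ k ∂P ≤ r * (k.factorial / (1 - q) ^ (k + 1)) / a ^ k + b ^ k := by
  obtain ⟨hint, hmoment⟩ := integral_natCast_pow_of_geometric_tail hN hq0 hq1 htail hk
  have hpoint : ∀ ω, |(N ω : ℝ) / a - b| ^ k ≤ (N ω : ℝ) ^ k / a ^ k + b ^ k := fun ω => by
    rw [← div_pow]; exact abs_sub_pow_le_pow_add_pow (by positivity) hb k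
  calc ∫ ω, |(N ω : ℝ) / a - b| ^ k ∂P
      ≤ ∫ ω, ((N ω : ℝ) ^ k / a ^ k + b ^ k) ∂P :=
        integral_mono_of_nonneg (.of_forall fun ω => by positivity)
          ((hint.div_const _).add (integrable_const _)) (.of_forall hpoint)
    _ = (r * ∑' n : ℕ, ((n : ℝ) + 1) ^ k * q ^ n) / a ^ k + b ^ k := by
        rw [integral_add (hint.div_const _) (integrable_const _), integral_div, integral_const,
          probReal_univ, one_smul, hmoment]
    _ ≤ r * (k.factorial / (1 - q) ^ (k + 1)) / a ^ k + b ^ k := by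
        gcongr
        exact tsum_succ_pow_mul_geometric_le k hq0 hq1

end GeometricTail

theorem measureReal_succ_eq_of_geometric {Ω : Type*} [MeasurableSpace Ω] {P : Measure Ω}
    {N : Ω → ℕ} {a b : ℕ} (hb : b ≠ 0)
    (hlaw : ∀ j : ℕ, 1 ≤ j → P {ω | N ω = j} = (a : ℝ≥0∞)⁻¹ * (1 - (b : ℝ≥0∞)⁻¹) ^ (j - 1))
    (n : ℕ) : P.real {ω | N ω = n + 1} = (a : ℝ)⁻¹ * (1 - (b : ℝ)⁻¹) ^ n := by
  have hb1 : (b : ℝ≥0∞)⁻¹ ≤ 1 :=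
    ENNReal.inv_le_one.2 (by exact_mod_cast Nat.one_le_iff_ne_zero.2 hb)
  rw [measureReal_def, hlaw (n + 1) (Nat.le_add_left 1 n), Nat.add_sub_cancel, ENNReal.toReal_mul,
    ENNReal.toReal_pow, ENNReal.toReal_sub_of_le hb1 ENNReal.one_ne_top, ENNReal.toReal_inv,
    ENNReal.toReal_inv]
  simp

/-- Let `N` have the visit-count distribution `P(N=0) = 1 - 1/(L D₁)`,
`P(N=k) = (1/(L² D₁ D₂))(1 - 1/(L D₂))^{k-1}` for `k ≥ 1`.  Then `η = N/D₂ - 1/D₁`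
satisfies `E[η] = 0` and, for every `k ≥ 1`, there is a constant `c = c(k)` independent of
`L`, `D₁`, `D₂` such that `E|η|^k ≤ c L^{k-1}`. -/
theorem stmt9 :
    ∀ k : ℕ, 1 ≤ k → ∃ c : ℝ,
      ∀ (L D₁ D₂ : ℕ), 1 ≤ L → 1 ≤ D₁ → 1 ≤ D₂ →
      ∀ (Ω : Type) [inst : MeasurableSpace Ω] (P : Measure Ω),
        IsProbabilityMeasure P →
      ∀ (N : Ω → ℕ), Measurable N →
      (P {ω | N ω = 0} = 1 - ((L * D₁ : ℕ) : ℝ≥0∞)⁻¹) →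
      (∀ j : ℕ, 1 ≤ j → P {ω | N ω = j} =
        ((L ^ 2 * D₁ * D₂ : ℕ) : ℝ≥0∞)⁻¹ * (1 - ((L * D₂ : ℕ) : ℝ≥0∞)⁻¹) ^ (j - 1)) →
      (∫ ω, ((N ω : ℝ) / D₂ - 1 / D₁) ∂P = 0) ∧
      ∫ ω, |(N ω : ℝ) / D₂ - 1 / D₁| ^ k ∂P ≤ c * (L : ℝ) ^ (k - 1) := by
  intro k hk
  obtain ⟨m, rfl⟩ := Nat.exists_eq_add_of_le' hk
  refine ⟨(m + 1).factorial + 1, fun L D₁ D₂ hL hD₁ hD₂ Ω _ P _ N hN _ hlaw => ?_⟩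
  set q : ℝ := 1 - ((L * D₂ : ℕ) : ℝ)⁻¹
  have hLD₂ : (1 : ℝ) ≤ ((L * D₂ : ℕ) : ℝ) := by
    exact_mod_cast Nat.one_le_iff_ne_zero.2 (by positivity)
  have hq0 : 0 ≤ q := sub_nonneg.2 (inv_le_one_of_one_le₀ hLD₂)
  have hq1 : q < 1 := sub_lt_self 1 (by positivity)
  have h1q : 1 - q = ((L * D₂ : ℕ) : ℝ)⁻¹ := sub_sub_cancel _ _
  have htail := measureReal_succ_eq_of_geometric (by positivity) hlaw
  have hL : (1 : ℝ) ≤ L := by exact_mod_cast hL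
  have hD₁ : (1 : ℝ) ≤ D₁ := by exact_mod_cast hD₁
  have hD₂ : (0 : ℝ) < D₂ := by exact_mod_cast hD₂
  constructor
  · rw [integral_div_sub_of_geometric_tail hN hq0 hq1 htail, h1q]
    push_cast
    field_simp
    ring
  · calc ∫ ω, |(N ω : ℝ) / D₂ - 1 / D₁| ^ (m + 1) ∂P
        ≤ ((L ^ 2 * D₁ * D₂ : ℕ) : ℝ)⁻¹ * ((m + 1).factorial / (1 - q) ^ (m + 1 + 1)) /
            (D₂ : ℝ) ^ (m + 1) + (1 / (D₁ : ℝ)) ^ (m + 1) :=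
          integral_abs_div_sub_pow_le_of_geometric_tail hN hq0 hq1 htail (by positivity)
            hD₂.le (by positivity) m.add_one_ne_zero
      _ = (m + 1).factorial * (L : ℝ) ^ m / D₁ + (1 / (D₁ : ℝ)) ^ (m + 1) := by
          rw [h1q, inv_pow, div_inv_eq_mul]; push_cast; field_simp; ring
      _ ≤ ((m + 1).factorial + 1) * (L : ℝ) ^ (m + 1 - 1) := by
          rw [Nat.add_sub_cancel, add_mul, one_mul]
          gcongr
          · exact div_le_self (by positivity) hD₁
          · exact (pow_le_one₀ (by positivity) (div_le_one_of_le₀ hD₁ (by positivity))).trans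
              (one_le_pow₀ hL)
end

section
/- Let Y^n be the simple random walk on {0,1,…,Rn} started at 0, and let ξ^n(0, m) := #{0 ≤ i ≤ m : Y^n_i = 0} be the occupation time at 0. Then there exist constants c₁, c₂ > 0 depending only on R such that P(ξ^n(0, n²) ≥ t·n) ≤ c₁·e^{-c₂·t} for all t ≥ 0 and all n ∈ ℕ. -/
open MeasureTheory Set
open scoped ENNReal

open scoped Classical in
/-- `Y` is a discrete-time simple random walk on the finite graph `G` started at `start`,
under the probability measure `P`: at each step it jumps to a uniformly chosen neighbour
of its current position, independently of the past. -/
def IsSRW {V : Type*} [Fintype V] (G : SimpleGraph V)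
    {Ω : Type*} [MeasurableSpace Ω] (P : Measure Ω) (Y : ℕ → Ω → V) (start : V) : Prop :=
  (∀ m v, MeasurableSet {ω | Y m ω = v}) ∧
  P {ω | Y 0 ω = start} = 1 ∧
  ∀ (m : ℕ) (traj : ℕ → V) (w : V),
    P {ω | Y (m + 1) ω = w ∧ ∀ i ≤ m, Y i ω = traj i} =
      (if G.Adj (traj m) w then ((G.degree (traj m) : ℝ≥0∞))⁻¹ else 0) *
        P {ω | ∀ i ≤ m, Y i ω = traj i}

namespace SRW11Aux

open Finset
open scoped Classical

noncomputable def kk (a : ℕ) (x y : Fin (a+1)) : ℝ :=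
  if (SimpleGraph.pathGraph (a+1)).Adj x y
  then ((SimpleGraph.pathGraph (a+1)).degree x : ℝ)⁻¹ else 0

noncomputable def th (a : ℕ) : ℝ := Real.exp (1/(8*(a:ℝ)))

noncomputable def gg (a : ℕ) (X : ℝ) : ℝ :=
  (22*(a:ℝ)^2 - 6*(a:ℝ)*X + 3*X*(X-1)) / (16*(a:ℝ)^2)

noncomputable def dl (a : ℕ) : ℝ := 3/(8*(a:ℝ)^2)

noncomputable def cntF (a m : ℕ) (f : Fin (m+1) → Fin (a+1)) : ℕ :=
  ∑ i, if f i = 0 then 1 else 0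

noncomputable def prodF (a m : ℕ) (f : Fin (m+1) → Fin (a+1)) : ℝ :=
  ∏ i : Fin m, kk a (f i.castSucc) (f i.succ)

variable {a m : ℕ}

lemma kk_nonneg (a : ℕ) (x y : Fin (a+1)) : 0 ≤ kk a x y := by
  unfold kk; split
  · positivity
  · exact le_rfl

lemma ha' (ha : 1 ≤ a) : (1:ℝ) ≤ (a:ℝ) := by exact_mod_cast ha

lemma g_ge_one (ha : 1 ≤ a) {X : ℝ} (h0 : 0 ≤ X) (h1 : X ≤ (a:ℝ)) :
    1 ≤ gg a X := by
  have h := ha' ha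
  rw [gg, le_div_iff₀ (by positivity)]
  nlinarith [sq_nonneg ((a:ℝ) - X)]

lemma th_ge_one (ha : 1 ≤ a) : 1 ≤ th a := by
  rw [th, Real.one_le_exp_iff]; positivity

lemma th_le (ha : 1 ≤ a) : th a ≤ 1 + (8/7) * (1/(8*(a:ℝ))) := by
  have h := ha' ha
  set u : ℝ := 1/(8*(a:ℝ)) with hu
  have hu0 : 0 < u := by positivity
  have hu8 : u ≤ 1/8 := by rw [hu, div_le_div_iff₀ (by positivity) (by norm_num)]; nlinarith
  have h1 : 1 - u ≤ Real.exp (-u) := by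
    have := Real.add_one_le_exp (-u); linarith
  have h2 : (0:ℝ) < 1 - u := by linarith
  have h5 : Real.exp u ≤ (1-u)⁻¹ := by
    rw [show Real.exp u = (Real.exp (-u))⁻¹ by rw [Real.exp_neg, inv_inv]]
    exact inv_anti₀ h2 h1
  have h6 : (1-u)⁻¹ ≤ 1 + (8/7)*u := by
    rw [inv_le_iff_one_le_mul₀ h2]
    nlinarith
  rw [th]; exact le_trans h5 h6

lemma dl_nonneg : 0 ≤ dl a := by rw [dl]; positivity

lemma nbr_zero (ha : 1 ≤ a) (x : Fin (a+1)) (hx : x.val = 0) :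
    Finset.univ.filter ((SimpleGraph.pathGraph (a+1)).Adj x) = {(⟨1, by omega⟩ : Fin (a+1))} := by
  ext y
  simp only [Finset.mem_filter, Finset.mem_univ, true_and, Finset.mem_singleton,
    SimpleGraph.pathGraph_adj, Fin.ext_iff]
  omega

lemma nbr_top (ha : 1 ≤ a) (x : Fin (a+1)) (hx : x.val = a) :
    Finset.univ.filter ((SimpleGraph.pathGraph (a+1)).Adj x) = {(⟨a-1, by omega⟩ : Fin (a+1))} := by
  ext y
  have hy := y.isLt
  simp only [Finset.mem_filter, Finset.mem_univ, true_and, Finset.mem_singleton,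
    SimpleGraph.pathGraph_adj, Fin.ext_iff]
  omega

lemma nbr_mid (x : Fin (a+1)) (hx0 : 0 < x.val) (hxa : x.val < a) :
    Finset.univ.filter ((SimpleGraph.pathGraph (a+1)).Adj x) =
      {(⟨x.val-1, by omega⟩ : Fin (a+1)), (⟨x.val+1, by omega⟩ : Fin (a+1))} := by
  ext y
  simp only [Finset.mem_filter, Finset.mem_univ, true_and, Finset.mem_insert,
    Finset.mem_singleton, SimpleGraph.pathGraph_adj, Fin.ext_iff]
  omega

lemma deg_eq (x : Fin (a+1)) :
    (SimpleGraph.pathGraph (a+1)).degree x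
      = (Finset.univ.filter ((SimpleGraph.pathGraph (a+1)).Adj x)).card := by
  rw [← SimpleGraph.neighborFinset_eq_filter, SimpleGraph.degree]

lemma ksum (x : Fin (a+1)) (F : Fin (a+1) → ℝ) :
    ∑ y, kk a x y * F y =
      ((Finset.univ.filter ((SimpleGraph.pathGraph (a+1)).Adj x)).card : ℝ)⁻¹ *
        ∑ y ∈ Finset.univ.filter ((SimpleGraph.pathGraph (a+1)).Adj x), F y := by
  rw [Finset.mul_sum, Finset.sum_filter]
  apply Finset.sum_congr rfl
  intro y _
  rw [kk, deg_eq]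
  split <;> simp [*]

lemma site (ha : 1 ≤ a) (x : Fin (a+1)) :
    (if x = 0 then th a else 1) * ∑ y, kk a x y * gg a (y.val : ℝ) ≤
      (1 + dl a) * gg a (x.val : ℝ) := by
  have hA : (1:ℝ) ≤ (a:ℝ) := by exact_mod_cast ha
  have hA0 : (0:ℝ) < (a:ℝ) := by linarith
  rcases Nat.lt_or_ge 0 x.val with hx0 | hx0
  swap
  · -- x.val = 0
    have hxv : x.val = 0 := by omega
    have hxeq : x = 0 := by apply Fin.ext; simpa using hxv
    rw [ksum, nbr_zero ha x hxv, hxeq, if_pos rfl]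
    rw [Finset.card_singleton, Finset.sum_singleton]
    have hcast : (((⟨1, by omega⟩ : Fin (a+1)).val : ℕ) : ℝ) = 1 := by norm_num
    rw [hcast]
    have hg1 : gg a 1 = (22*(a:ℝ)^2 - 6*(a:ℝ)) / (16*(a:ℝ)^2) := by
      rw [gg]; ring_nf
    have hg0 : gg a (((0:Fin (a+1)).val : ℕ) : ℝ) = 11/8 := by
      have h00 : (((0:Fin (a+1)).val : ℕ) : ℝ) = 0 := by norm_num
      rw [h00, gg]; field_simp; ring
    rw [hg0]
    have hg1nn : 0 ≤ gg a 1 := le_trans zero_le_one (g_ge_one ha zero_le_one hA)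
    have step1 : th a * gg a 1 ≤ (1 + (8/7) * (1/(8*(a:ℝ)))) * gg a 1 :=
      mul_le_mul_of_nonneg_right (th_le ha) hg1nn
    have heq : (1 + (8/7) * (1/(8*(a:ℝ)))) * ((22*(a:ℝ)^2 - 6*(a:ℝ)) / (16*(a:ℝ)^2))
          = ((7*(a:ℝ)+1) * (22*(a:ℝ)^2 - 6*(a:ℝ))) / (112*(a:ℝ)^3) := by
      field_simp; ring
    have step2 : (1 + (8/7) * (1/(8*(a:ℝ)))) * gg a 1 ≤ 11/8 := by
      rw [hg1, heq, div_le_iff₀ (by positivity)]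
      nlinarith
    have step3 : (11:ℝ)/8 ≤ (1 + dl a) * (11/8) := by nlinarith [dl_nonneg (a := a)]
    calc th a * ((1:ℝ)⁻¹ * gg a 1) = th a * gg a 1 := by norm_num
    _ ≤ 11/8 := le_trans step1 step2
    _ ≤ (1 + dl a) * (11/8) := step3
  rcases Nat.lt_or_ge x.val a with hxa | hxa
  · -- interior
    have hxne : x ≠ 0 := by
      intro h; rw [h] at hx0; simp at hx0
    rw [if_neg hxne, ksum, nbr_mid x hx0 hxa]
    have hne : (⟨x.val-1, by omega⟩ : Fin (a+1)) ≠ (⟨x.val+1, by omega⟩ : Fin (a+1)) := by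
      simp only [ne_eq, Fin.ext_iff]; omega
    rw [Finset.card_insert_of_notMem (by simpa using hne), Finset.card_singleton,
      Finset.sum_insert (by simpa using hne), Finset.sum_singleton]
    set X : ℝ := (x.val : ℝ) with hX
    have hXb : 1 ≤ X ∧ X + 1 ≤ (a:ℝ) := by
      constructor
      · rw [hX]; exact_mod_cast hx0
      · rw [hX]
        have hna : x.val + 1 ≤ a := hxa
        exact_mod_cast hna
    have hc1 : (((⟨x.val-1, by omega⟩ : Fin (a+1)).val : ℕ) : ℝ) = X - 1 := by
      simp only [hX]; push_cast [Nat.cast_sub (by omega : 1 ≤ x.val)]; ring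
    have hc2 : (((⟨x.val+1, by omega⟩ : Fin (a+1)).val : ℕ) : ℝ) = X + 1 := by
      simp only [hX]; push_cast; ring
    rw [hc1, hc2]
    have hid : gg a (X-1) + gg a (X+1) = 2 * gg a X + dl a := by
      rw [gg, gg, gg, dl]; field_simp; ring
    have hgX : 1 ≤ gg a X := g_ge_one ha (by linarith [hXb.1]) (by linarith [hXb.2])
    have hhalf : ((2:ℕ):ℝ)⁻¹ * (gg a (X-1) + gg a (X+1)) = gg a X + dl a / 2 := by
      rw [hid]; push_cast; ring
    rw [hhalf]
    nlinarith [dl_nonneg (a := a)]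
  · -- top
    have hxv : x.val = a := by omega
    have hxne : x ≠ 0 := by
      intro h; rw [h] at hxv; simp at hxv; omega
    rw [if_neg hxne, ksum, nbr_top ha x hxv]
    simp only [Finset.card_singleton, Finset.sum_singleton]
    have hc : (((⟨a-1, by omega⟩ : Fin (a+1)).val : ℕ) : ℝ) = (a:ℝ) - 1 := by
      push_cast [Nat.cast_sub ha]; ring
    rw [hc]
    have hXv : (x.val : ℝ) = (a:ℝ) := by exact_mod_cast hxv
    rw [hXv]
    have hid : gg a ((a:ℝ)-1) = gg a (a:ℝ) + dl a := by
      rw [gg, gg, dl]; field_simp; ring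
    have hgA : 1 ≤ gg a (a:ℝ) := g_ge_one ha (by linarith) le_rfl
    rw [hid]
    have h1 : ((1:ℕ):ℝ)⁻¹ = 1 := by norm_num
    rw [h1]
    nlinarith [dl_nonneg (a := a)]

lemma sum_cons (F : (Fin (m+2) → Fin (a+1)) → ℝ) :
    ∑ f : Fin (m+2) → Fin (a+1), F f
      = ∑ y : Fin (a+1), ∑ f : Fin (m+1) → Fin (a+1), F (Fin.cons y f) := by
  have h1 : ∑ f : Fin (m+2) → Fin (a+1), F f
      = ∑ p : Fin (a+1) × (Fin (m+1) → Fin (a+1)), F (Fin.cons p.1 p.2) :=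
    (Fintype.sum_equiv (Fin.consEquiv (fun _ => Fin (a+1)))
      (fun p => F (Fin.cons p.1 p.2)) F (fun p => rfl)).symm
  rw [h1, Fintype.sum_prod_type]

lemma cntF_cons (y : Fin (a+1)) (f : Fin (m+1) → Fin (a+1)) :
    cntF a (m+1) (Fin.cons y f) = (if y = 0 then 1 else 0) + cntF a m f := by
  rw [cntF, Fin.sum_univ_succ, cntF]
  simp [Fin.cons_zero, Fin.cons_succ]

lemma prodF_cons (y : Fin (a+1)) (f : Fin (m+1) → Fin (a+1)) :
    prodF a (m+1) (Fin.cons y f) = kk a y (f 0) * prodF a m f := by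
  rw [prodF, Fin.prod_univ_succ, prodF]
  have h0 : kk a ((Fin.cons y f : Fin (m+2) → Fin (a+1)) ((0:Fin (m+1)).castSucc))
        ((Fin.cons y f : Fin (m+2) → Fin (a+1)) ((0:Fin (m+1)).succ))
      = kk a y (f 0) := by
    simp
  rw [h0]
  refine congrArg (fun t => kk a y (f 0) * t) (Finset.prod_congr rfl fun i _ => ?_)
  show kk a ((Fin.cons y f : Fin (m+2) → Fin (a+1)) (i.succ.castSucc))
      ((Fin.cons y f : Fin (m+2) → Fin (a+1)) (i.succ.succ)) = kk a (f i.castSucc) (f i.succ)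
  rw [← Fin.succ_castSucc, Fin.cons_succ, Fin.cons_succ]

lemma SF_bound (ha : 1 ≤ a) :
    ∀ m (x : Fin (a+1)),
      ∑ f : Fin (m+1) → Fin (a+1), (if f 0 = x then 1 else 0) * th a ^ (cntF a m f) * prodF a m f
        ≤ (1 + dl a)^m * (th a * gg a (x.val : ℝ)) := by
  have hth1 := th_ge_one (a := a) ha
  have hth0 : (0:ℝ) < th a := lt_of_lt_of_le zero_lt_one hth1
  have hgx : ∀ x : Fin (a+1), 1 ≤ gg a (x.val : ℝ) := by
    intro x
    apply g_ge_one ha (by positivity)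
    have := x.isLt
    exact_mod_cast Nat.lt_succ_iff.mp this
  intro m
  induction m with
  | zero =>
    intro x
    have hrw : ∑ f : Fin 1 → Fin (a+1), (if f 0 = x then 1 else 0) * th a ^ (cntF a 0 f) * prodF a 0 f
        = ∑ y : Fin (a+1), (if y = x then 1 else 0) * th a ^ (if y = 0 then 1 else 0) := by
      refine (Fintype.sum_equiv (Equiv.funUnique (Fin 1) (Fin (a+1))).symm
        (fun y => (if y = x then 1 else 0) * th a ^ (if y = 0 then 1 else 0))
        (fun f => (if f 0 = x then 1 else 0) * th a ^ (cntF a 0 f) * prodF a 0 f) ?_).symm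
      intro y
      have hc : cntF a 0 (fun _ : Fin 1 => y) = (if y = 0 then 1 else 0) := by
        rw [cntF, Fin.sum_univ_one]
      have hp : prodF a 0 (fun _ : Fin 1 => y) = 1 := by
        rw [prodF, Fin.prod_univ_zero]
      show (if y = x then (1:ℝ) else 0) * th a ^ (if y = 0 then 1 else 0)
          = (if (fun _ : Fin 1 => y) 0 = x then (1:ℝ) else 0) * th a ^ (cntF a 0 (fun _ : Fin 1 => y)) * prodF a 0 (fun _ : Fin 1 => y)
      rw [hc, hp]; ring
    rw [hrw]
    have hrw2 : ∀ y : Fin (a+1), (if y = x then (1:ℝ) else 0) * th a ^ (if y = 0 then 1 else 0)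
        = (if y = x then th a ^ (if y = 0 then 1 else 0) else 0) := by
      intro y; split <;> simp
    rw [Finset.sum_congr rfl fun y _ => hrw2 y]
    rw [Finset.sum_ite_eq' Finset.univ x (fun y => th a ^ (if y = 0 then 1 else 0))]
    simp only [Finset.mem_univ, if_true, pow_zero, pow_one]
    have := hgx x
    have h10 : (1:ℝ) + dl a ≥ 1 := by nlinarith [dl_nonneg (a := a)]
    split
    · rw [pow_one]; nlinarith
    · rw [pow_zero]; nlinarith
  | succ m IH =>
    intro x
    rw [sum_cons (fun f => (if f 0 = x then 1 else 0) * th a ^ (cntF a (m+1) f) * prodF a (m+1) f)]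
    set B : (Fin (m+1) → Fin (a+1)) → ℝ := fun f => th a ^ cntF a m f * prodF a m f with hB
    have hterm : ∀ (y : Fin (a+1)) (f : Fin (m+1) → Fin (a+1)),
        (if (Fin.cons y f : Fin (m+2) → Fin (a+1)) 0 = x then (1:ℝ) else 0)
            * th a ^ (cntF a (m+1) (Fin.cons y f)) * prodF a (m+1) (Fin.cons y f)
        = if y = x then (if y = 0 then th a else 1) * (kk a y (f 0) * B f) else 0 := by
      intro y f
      rw [Fin.cons_zero, cntF_cons, prodF_cons, pow_add, hB]
      by_cases hy : y = x <;> by_cases hy0 : y = 0 <;> simp [hy, hy0] <;> ring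
    rw [Finset.sum_congr rfl fun y _ => Finset.sum_congr rfl fun f _ => hterm y f]
    have hpull : ∀ y : Fin (a+1),
        ∑ f : Fin (m+1) → Fin (a+1), (if y = x then (if y = 0 then th a else 1) * (kk a y (f 0) * B f) else 0)
        = if y = x then ∑ f : Fin (m+1) → Fin (a+1), (if y = 0 then th a else 1) * (kk a y (f 0) * B f) else 0 := by
      intro y; split <;> simp
    rw [Finset.sum_congr rfl fun y _ => hpull y]
    rw [Finset.sum_ite_eq' Finset.univ x
      (fun y => ∑ f : Fin (m+1) → Fin (a+1), (if y = 0 then th a else 1) * (kk a y (f 0) * B f))]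
    simp only [Finset.mem_univ, if_true]
    rw [← Finset.mul_sum]
    have hsplit : ∑ f : Fin (m+1) → Fin (a+1), kk a x (f 0) * B f
        = ∑ z : Fin (a+1), kk a x z * ∑ f : Fin (m+1) → Fin (a+1), (if f 0 = z then 1 else 0) * th a ^ cntF a m f * prodF a m f := by
      have h1 : ∀ f : Fin (m+1) → Fin (a+1), kk a x (f 0) * B f
          = ∑ z : Fin (a+1), (if f 0 = z then kk a x z * B f else 0) := by
        intro f
        rw [Finset.sum_ite_eq Finset.univ (f 0) (fun z => kk a x z * B f)]
        simp
      rw [Finset.sum_congr rfl fun f _ => h1 f, Finset.sum_comm]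
      apply Finset.sum_congr rfl
      intro z _
      rw [Finset.mul_sum]
      apply Finset.sum_congr rfl
      intro f _
      rw [hB]
      split <;> ring
    rw [hsplit]
    have hmono : ∑ z : Fin (a+1), kk a x z * ∑ f : Fin (m+1) → Fin (a+1), (if f 0 = z then 1 else 0) * th a ^ cntF a m f * prodF a m f
        ≤ ∑ z : Fin (a+1), kk a x z * ((1 + dl a)^m * (th a * gg a (z.val : ℝ))) := by
      apply Finset.sum_le_sum
      intro z _
      exact mul_le_mul_of_nonneg_left (IH z) (kk_nonneg a x z)
    have hif : 0 ≤ (if x = 0 then th a else 1) := by split <;> positivity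
    calc (if x = 0 then th a else 1) * ∑ z : Fin (a+1), kk a x z * ∑ f : Fin (m+1) → Fin (a+1), (if f 0 = z then 1 else 0) * th a ^ cntF a m f * prodF a m f
        ≤ (if x = 0 then th a else 1) * ∑ z : Fin (a+1), kk a x z * ((1 + dl a)^m * (th a * gg a (z.val : ℝ))) :=
          mul_le_mul_of_nonneg_left hmono hif
      _ = (1 + dl a)^m * th a * ((if x = 0 then th a else 1) * ∑ z : Fin (a+1), kk a x z * gg a (z.val : ℝ)) := by
          rw [Finset.mul_sum, Finset.mul_sum, Finset.mul_sum]
          apply Finset.sum_congr rfl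
          intro z _
          ring
      _ ≤ (1 + dl a)^m * th a * ((1 + dl a) * gg a (x.val : ℝ)) := by
          exact mul_le_mul_of_nonneg_left (site ha x)
            (mul_nonneg (pow_nonneg (by nlinarith [dl_nonneg (a := a)]) m) (le_of_lt hth0))
      _ = (1 + dl a)^(m+1) * (th a * gg a (x.val : ℝ)) := by ring

lemma cyl {a : ℕ} {Ω : Type} [MeasurableSpace Ω] {P : Measure Ω} [IsProbabilityMeasure P]
    {Y : ℕ → Ω → Fin (a+1)}
    (hY : IsSRW (SimpleGraph.pathGraph (a+1)) P Y 0) :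
    ∀ (m : ℕ) (traj : ℕ → Fin (a+1)),
      P {ω | ∀ i ≤ m, Y i ω = traj i}
        = ENNReal.ofReal ((if traj 0 = 0 then (1:ℝ) else 0)
            * ∏ i ∈ Finset.range m, kk a (traj i) (traj (i+1))) := by
  intro m
  induction m with
  | zero =>
    intro traj
    have hset : {ω | ∀ i ≤ 0, Y i ω = traj i} = {ω | Y 0 ω = traj 0} := by
      ext ω; simp [Nat.le_zero]
    rw [hset, Finset.prod_range_zero, mul_one]
    by_cases h0 : traj 0 = 0
    · rw [if_pos h0, h0, hY.2.1]; norm_num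
    · rw [if_neg h0]
      have hnull : P {ω | Y 0 ω = 0}ᶜ = 0 := by
        rw [prob_compl_eq_one_sub (hY.1 0 0), hY.2.1, tsub_self]
      have hsub : {ω | Y 0 ω = traj 0} ⊆ {ω | Y 0 ω = 0}ᶜ := by
        intro ω hω
        simp only [Set.mem_compl_iff, Set.mem_setOf_eq] at *
        rw [hω]; exact h0
      rw [measure_mono_null hsub hnull]
      norm_num
  | succ m IH =>
    intro traj
    have hset : {ω | ∀ i ≤ m+1, Y i ω = traj i}
        = {ω | Y (m+1) ω = traj (m+1) ∧ ∀ i ≤ m, Y i ω = traj i} := by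
      ext ω
      simp only [Set.mem_setOf_eq]
      constructor
      · intro h; exact ⟨h (m+1) le_rfl, fun i hi => h i (Nat.le_succ_of_le hi)⟩
      · rintro ⟨h1, h2⟩ i hi
        by_cases hi' : i ≤ m
        · exact h2 i hi'
        · have : i = m+1 := by omega
          rw [this]; exact h1
    rw [hset, hY.2.2 m traj (traj (m+1)), IH traj]
    have hfac : (if (SimpleGraph.pathGraph (a+1)).Adj (traj m) (traj (m+1))
          then (((SimpleGraph.pathGraph (a+1)).degree (traj m) : ℝ≥0∞))⁻¹ else 0)
        = ENNReal.ofReal (kk a (traj m) (traj (m+1))) := by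
      rw [kk]
      by_cases hadj : (SimpleGraph.pathGraph (a+1)).Adj (traj m) (traj (m+1))
      · rw [if_pos hadj, if_pos hadj]
        have hd : 0 < (SimpleGraph.pathGraph (a+1)).degree (traj m) :=
          (SimpleGraph.degree_pos_iff_exists_adj _ _).mpr ⟨_, hadj⟩
        have hd' : (0:ℝ) < ((SimpleGraph.pathGraph (a+1)).degree (traj m) : ℝ) := by
          exact_mod_cast hd
        rw [← ENNReal.ofReal_natCast, ← ENNReal.ofReal_inv_of_pos hd']
      · rw [if_neg hadj, if_neg hadj, ENNReal.ofReal_zero]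
    rw [hfac, ← ENNReal.ofReal_mul (kk_nonneg a (traj m) (traj (m+1)))]
    congr 1
    rw [Finset.prod_range_succ]
    ring


end SRW11Aux

set_option maxHeartbeats 2000000 in
open SRW11Aux in
open scoped Classical in
/-- Occupation time tail bound on the path `{0,1,…,Rn}`: there exist constants
`c₁, c₂ > 0` depending only on `R` such that, for all `n ≥ 1` and all `t ≥ 0`, the simple
random walk on the path graph started at `0` satisfies
`P(ξ(0, n²) ≥ t n) ≤ c₁ e^{-c₂ t}`, where `ξ(0,m)` counts visits to `0` up to time `m`. -/
theorem stmt11 (R : ℕ) (hR : 1 ≤ R) :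
    ∃ c₁ c₂ : ℝ, 0 < c₁ ∧ 0 < c₂ ∧
      ∀ (n : ℕ), 1 ≤ n →
      ∀ (Ω : Type) [inst : MeasurableSpace Ω] (P : Measure Ω),
        IsProbabilityMeasure P →
      ∀ Y : ℕ → Ω → Fin (R * n + 1),
        IsSRW (SimpleGraph.pathGraph (R * n + 1)) P Y 0 →
        ∀ t : ℝ, 0 ≤ t →
        P {ω | t * (n : ℝ) ≤
            ((((Finset.range (n ^ 2 + 1)).filter (fun i => Y i ω = 0)).card : ℕ) : ℝ)} ≤
          ENNReal.ofReal (c₁ * Real.exp (-c₂ * t)) := by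
  have hRpos : (0:ℝ) < (R:ℝ) := by exact_mod_cast hR
  refine ⟨6, 1/(8*(R:ℝ)), by norm_num, div_pos one_pos (by linarith), ?_⟩
  intro n hn Ω inst P instP Y hY t ht
  have hnpos : (0:ℝ) < (n:ℝ) := by exact_mod_cast hn
  have ha : 1 ≤ R * n := by
    calc 1 = 1 * 1 := by norm_num
    _ ≤ R * n := Nat.mul_le_mul hR hn
  have haR : ((R * n : ℕ):ℝ) = (R:ℝ) * (n:ℝ) := by push_cast; ring
  have haRpos : (0:ℝ) < ((R * n : ℕ):ℝ) := by rw [haR]; positivity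
  set tr : (Fin (n^2+1) → Fin (R*n+1)) → ℕ → Fin (R*n+1) :=
    fun f i => f ⟨min i (n^2), by omega⟩ with htrdef
  have htr : ∀ (f : Fin (n^2+1) → Fin (R*n+1)) (i : ℕ) (hi : i ≤ n^2),
      tr f i = f ⟨i, by omega⟩ := by
    intro f i hi
    simp only [htrdef]
    congr 1
    exact Fin.ext (by simp [Nat.min_eq_left hi])
  set cnt : (Fin (n^2+1) → Fin (R*n+1)) → ℕ :=
    fun f => ((Finset.range (n^2+1)).filter (fun i => tr f i = 0)).card with hcntdef
  set w : (Fin (n^2+1) → Fin (R*n+1)) → ℝ :=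
    fun f => (if tr f 0 = 0 then (1:ℝ) else 0)
      * ∏ i ∈ Finset.range (n^2), kk (R*n) (tr f i) (tr f (i+1)) with hwdef
  have hw_nonneg : ∀ f, 0 ≤ w f := by
    intro f
    simp only [hwdef]
    apply mul_nonneg
    · split <;> norm_num
    · exact Finset.prod_nonneg fun i _ => kk_nonneg (R*n) _ _
  set T : Finset (Fin (n^2+1) → Fin (R*n+1)) :=
    Finset.univ.filter (fun f => t * (n:ℝ) ≤ (cnt f : ℝ)) with hTdef
  set C : (Fin (n^2+1) → Fin (R*n+1)) → Set Ω :=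
    fun f => {ω | ∀ i ≤ n^2, Y i ω = tr f i} with hCdef
  -- covering
  have hsub : {ω | t * (n : ℝ) ≤
      ((((Finset.range (n ^ 2 + 1)).filter (fun i => Y i ω = 0)).card : ℕ) : ℝ)}
      ⊆ ⋃ f ∈ T, C f := by
    intro ω hω
    simp only [Set.mem_setOf_eq] at hω
    set F : Fin (n^2+1) → Fin (R*n+1) := fun j => Y j.val ω with hFdef
    have hmemC : ω ∈ C F := by
      simp only [hCdef, Set.mem_setOf_eq]
      intro i hi
      rw [htr F i hi]
    have hcnteq : ((Finset.range (n^2+1)).filter (fun i => tr F i = 0))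
        = ((Finset.range (n^2+1)).filter (fun i => Y i ω = 0)) := by
      apply Finset.filter_congr
      intro i hi
      rw [Finset.mem_range] at hi
      rw [htr F i (by omega)]
    have hmemT : F ∈ T := by
      simp only [hTdef, Finset.mem_filter]
      refine ⟨Finset.mem_univ F, ?_⟩
      simp only [hcntdef]
      rw [hcnteq]
      exact hω
    exact Set.mem_biUnion hmemT hmemC
  have hle1 : P {ω | t * (n : ℝ) ≤
      ((((Finset.range (n ^ 2 + 1)).filter (fun i => Y i ω = 0)).card : ℕ) : ℝ)}
      ≤ ∑ f ∈ T, P (C f) :=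
    le_trans (measure_mono hsub) (measure_biUnion_finset_le T C)
  have hcyl : ∀ f, P (C f) = ENNReal.ofReal (w f) := by
    intro f
    simp only [hCdef, hwdef]
    exact cyl hY (n^2) (tr f)
  have hle2 : ∑ f ∈ T, P (C f) = ENNReal.ofReal (∑ f ∈ T, w f) := by
    rw [ENNReal.ofReal_sum_of_nonneg (fun f _ => hw_nonneg f)]
    exact Finset.sum_congr rfl fun f _ => hcyl f
  -- real estimates
  have hth1 : (1:ℝ) ≤ th (R*n) := th_ge_one ha
  have hstep1 : ∀ f ∈ T, w f ≤ Real.exp (-(1/(8*(R:ℝ))) * t) * (th (R*n) ^ cnt f * w f) := by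
    intro f hf
    simp only [hTdef, Finset.mem_filter] at hf
    have hcnt : t * (n:ℝ) ≤ (cnt f : ℝ) := hf.2
    have hthpow : th (R*n) ^ cnt f = Real.exp ((cnt f : ℝ) * (1/(8*((R*n:ℕ):ℝ)))) := by
      rw [th, Real.exp_nat_mul]
    have hkey : (1:ℝ) ≤ Real.exp (-(1/(8*(R:ℝ))) * t) * th (R*n) ^ cnt f := by
      rw [hthpow, ← Real.exp_add]
      apply Real.one_le_exp
      have hmul := mul_le_mul_of_nonneg_right hcnt
        (le_of_lt (by positivity : (0:ℝ) < 1/(8*((R:ℝ)*(n:ℝ)))))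
      have heq : t * (n:ℝ) * (1/(8*((R:ℝ)*(n:ℝ)))) = t * (1/(8*(R:ℝ))) := by
        field_simp
      rw [haR]
      nlinarith [hmul, heq]
    calc w f = 1 * w f := (one_mul _).symm
    _ ≤ (Real.exp (-(1/(8*(R:ℝ))) * t) * th (R*n) ^ cnt f) * w f :=
        mul_le_mul_of_nonneg_right hkey (hw_nonneg f)
    _ = Real.exp (-(1/(8*(R:ℝ))) * t) * (th (R*n) ^ cnt f * w f) := by ring
  have hbridge : ∀ f : Fin (n^2+1) → Fin (R*n+1), th (R*n) ^ cnt f * w f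
      = (if f 0 = (0 : Fin (R*n+1)) then 1 else 0) * th (R*n) ^ (cntF (R*n) (n^2) f)
          * prodF (R*n) (n^2) f := by
    intro f
    have h3 : tr f 0 = f 0 := by
      rw [htr f 0 (Nat.zero_le (n^2))]
      exact congrArg f (Fin.ext (by simp))
    have h1 : cnt f = cntF (R*n) (n^2) f := by
      simp only [hcntdef, cntF]
      rw [Finset.card_filter]
      rw [← Fin.sum_univ_eq_sum_range (fun i => if tr f i = 0 then 1 else 0) (n^2+1)]
      apply Finset.sum_congr rfl
      intro j _
      have hj : tr f (j.val) = f j := by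
        rw [htr f j.val (Nat.lt_succ_iff.mp j.isLt)]
      rw [hj]
    have h2 : ∏ i ∈ Finset.range (n^2), kk (R*n) (tr f i) (tr f (i+1))
        = prodF (R*n) (n^2) f := by
      rw [prodF, ← Fin.prod_univ_eq_prod_range (fun i => kk (R*n) (tr f i) (tr f (i+1))) (n^2)]
      apply Finset.prod_congr rfl
      intro j _
      have hc1 : tr f (j.val) = f j.castSucc := by
        rw [htr f j.val (by omega)]
        congr 1
      have hc2 : tr f (j.val + 1) = f j.succ := by
        rw [htr f (j.val+1) (by omega)]
        congr 1
      rw [hc1, hc2]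
    simp only [hwdef]
    rw [h1, h2, h3]
    ring
  have hstep2 : ∑ f ∈ T, w f ≤ Real.exp (-(1/(8*(R:ℝ))) * t)
      * ∑ f : Fin (n^2+1) → Fin (R*n+1),
          (if f 0 = (0 : Fin (R*n+1)) then 1 else 0) * th (R*n) ^ (cntF (R*n) (n^2) f)
            * prodF (R*n) (n^2) f := by
    calc ∑ f ∈ T, w f ≤ ∑ f ∈ T, Real.exp (-(1/(8*(R:ℝ))) * t) * (th (R*n) ^ cnt f * w f) :=
          Finset.sum_le_sum hstep1
    _ = Real.exp (-(1/(8*(R:ℝ))) * t) * ∑ f ∈ T, th (R*n) ^ cnt f * w f := by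
          rw [Finset.mul_sum]
    _ ≤ Real.exp (-(1/(8*(R:ℝ))) * t) * ∑ f : Fin (n^2+1) → Fin (R*n+1),
          th (R*n) ^ cnt f * w f := by
          apply mul_le_mul_of_nonneg_left _ (le_of_lt (Real.exp_pos _))
          apply Finset.sum_le_univ_sum_of_nonneg
          intro f
          exact mul_nonneg (pow_nonneg (by linarith) _) (hw_nonneg f)
    _ = Real.exp (-(1/(8*(R:ℝ))) * t) * ∑ f : Fin (n^2+1) → Fin (R*n+1),
          (if f 0 = (0 : Fin (R*n+1)) then 1 else 0) * th (R*n) ^ (cntF (R*n) (n^2) f)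
            * prodF (R*n) (n^2) f := by
          rw [Finset.sum_congr rfl fun f _ => hbridge f]
  -- numeric bound on the total sum
  have htot : ∑ f : Fin (n^2+1) → Fin (R*n+1),
      (if f 0 = (0 : Fin (R*n+1)) then 1 else 0) * th (R*n) ^ (cntF (R*n) (n^2) f)
        * prodF (R*n) (n^2) f ≤ 6 := by
    have hS := SF_bound ha (n^2) (0 : Fin (R*n+1))
    have hg0 : gg (R*n) (((0 : Fin (R*n+1)).val : ℕ) : ℝ) = 11/8 := by
      have h00 : (((0 : Fin (R*n+1)).val : ℕ) : ℝ) = 0 := by norm_num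
      rw [h00, gg]
      rw [show (22*((R*n:ℕ):ℝ)^2 - 6*((R*n:ℕ):ℝ)*0 + 3*0*(0-1)) = 22*((R*n:ℕ):ℝ)^2 by ring]
      rw [div_eq_iff (by positivity)]
      ring
    have hdl : (1 + dl (R*n))^(n^2) ≤ Real.exp (3/8 : ℝ) := by
      have h1 : (1 + dl (R*n)) ≤ Real.exp (dl (R*n)) := by
        have := Real.add_one_le_exp (dl (R*n)); linarith
      have h2 : (1 + dl (R*n))^(n^2) ≤ Real.exp (dl (R*n)) ^ (n^2) := by
        apply pow_le_pow_left₀ _ h1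
        nlinarith [dl_nonneg (a := R*n)]
      have h3 : Real.exp (dl (R*n)) ^ (n^2) = Real.exp (((n^2 : ℕ):ℝ) * dl (R*n)) := by
        rw [Real.exp_nat_mul]
      have h4 : ((n^2 : ℕ):ℝ) * dl (R*n) ≤ 3/8 := by
        rw [dl]
        have hsq : ((n^2:ℕ):ℝ) = (n:ℝ)^2 := by push_cast; ring
        rw [hsq, haR]
        rw [show (n:ℝ)^2 * (3 / (8*((R:ℝ)*(n:ℝ))^2)) = (3/8) * ((n:ℝ)^2 / ((R:ℝ)*(n:ℝ))^2) by
          field_simp]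
        have hfrac : (n:ℝ)^2 / ((R:ℝ)*(n:ℝ))^2 ≤ 1 := by
          rw [div_le_one (by positivity)]
          have hR1 : (1:ℝ) ≤ (R:ℝ) := by exact_mod_cast hR
          have h1R2 : (1:ℝ) ≤ (R:ℝ)^2 := by nlinarith
          nlinarith [mul_le_mul_of_nonneg_right h1R2 (sq_nonneg (n:ℝ))]
        nlinarith
      calc (1 + dl (R*n))^(n^2) ≤ Real.exp (dl (R*n)) ^ (n^2) := h2
      _ = Real.exp (((n^2 : ℕ):ℝ) * dl (R*n)) := h3
      _ ≤ Real.exp (3/8 : ℝ) := Real.exp_le_exp.mpr h4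
    have hth8 : th (R*n) ≤ Real.exp (1/8 : ℝ) := by
      rw [th]
      apply Real.exp_le_exp.mpr
      rw [div_le_div_iff₀ (by positivity) (by norm_num)]
      nlinarith [haRpos, (by exact_mod_cast ha : (1:ℝ) ≤ ((R*n:ℕ):ℝ))]
    have hehalf : Real.exp (3/8 : ℝ) * Real.exp (1/8 : ℝ) = Real.exp (1/2 : ℝ) := by
      rw [← Real.exp_add]; norm_num
    have hexp2 : Real.exp (1/2 : ℝ) ≤ 2 := by
      have hsq : Real.exp (1/2 : ℝ) * Real.exp (1/2 : ℝ) = Real.exp 1 := by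
        rw [← Real.exp_add]; norm_num
      nlinarith [Real.exp_one_lt_d9, Real.exp_pos (1/2 : ℝ)]
    calc ∑ f : Fin (n^2+1) → Fin (R*n+1),
        (if f 0 = (0 : Fin (R*n+1)) then 1 else 0) * th (R*n) ^ (cntF (R*n) (n^2) f)
          * prodF (R*n) (n^2) f
        ≤ (1 + dl (R*n))^(n^2) * (th (R*n) * gg (R*n) (((0 : Fin (R*n+1)).val : ℕ) : ℝ)) := hS
      _ = (1 + dl (R*n))^(n^2) * th (R*n) * (11/8) := by rw [hg0]; ring
      _ ≤ Real.exp (3/8 : ℝ) * Real.exp (1/8 : ℝ) * (11/8) := by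
          have hthpos : (0:ℝ) < th (R*n) := by linarith
          have h1 : (0:ℝ) ≤ (1 + dl (R*n))^(n^2) := by
            apply pow_nonneg; nlinarith [dl_nonneg (a := R*n)]
          nlinarith [mul_le_mul hdl hth8 (le_of_lt hthpos) (le_of_lt (Real.exp_pos (3/8 : ℝ)))]
      _ = Real.exp (1/2 : ℝ) * (11/8) := by rw [hehalf]
      _ ≤ 6 := by nlinarith [hexp2, Real.exp_pos (1/2 : ℝ)]
  -- conclude
  have hreal : ∑ f ∈ T, w f ≤ 6 * Real.exp (-(1/(8*(R:ℝ))) * t) := by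
    calc ∑ f ∈ T, w f ≤ Real.exp (-(1/(8*(R:ℝ))) * t)
        * ∑ f : Fin (n^2+1) → Fin (R*n+1),
            (if f 0 = (0 : Fin (R*n+1)) then 1 else 0) * th (R*n) ^ (cntF (R*n) (n^2) f)
              * prodF (R*n) (n^2) f := hstep2
    _ ≤ Real.exp (-(1/(8*(R:ℝ))) * t) * 6 :=
        mul_le_mul_of_nonneg_left htot (le_of_lt (Real.exp_pos _))
    _ = 6 * Real.exp (-(1/(8*(R:ℝ))) * t) := by ring
  calc P {ω | t * (n : ℝ) ≤
      ((((Finset.range (n ^ 2 + 1)).filter (fun i => Y i ω = 0)).card : ℕ) : ℝ)}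
      ≤ ∑ f ∈ T, P (C f) := hle1
    _ = ENNReal.ofReal (∑ f ∈ T, w f) := hle2
    _ ≤ ENNReal.ofReal (6 * Real.exp (-(1/(8*(R:ℝ))) * t)) := ENNReal.ofReal_le_ofReal hreal
end
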